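/- arXiv:1801.05934 — 3 statements merged into one kernel-verified Lean document; each statement's English description precedes it below -/
import Mathlib

section
/- The partition functions of the sticky zero-range process converge: with Z = κ⋆ · Γ(α)^{κ⋆−1} · Π_{x∈S∖S⋆} Γ_x one has lim_{N→∞} Z_N = Z. -/
open Filter Topology Finset
open scoped Classical

noncomputable section

/-- `a(n)`: `a(0)=1`, `a(n)=n^α` for `n ≥ 1`. -/
def aZR (α : ℝ) (n : ℕ) : ℝ := if n = 0 then 1 else (n : ℝ) ^ α

/-- The set of configurations of `N` particles on `S`. -/
def configs (S : Type*) [Fintype S] (N : ℕ) : Finset (S → ℕ) :=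
  (Fintype.piFinset fun _ : S => Finset.range (N + 1)).filter fun η => ∑ x, η x = N

end

/-!
With `w x j = m⋆(x) ^ j / a(j)`, `Z_N / N ^ α` is the `N`-th coefficient of
`∏ x, ∑ j, w x j * X ^ j`, an iterated convolution. If `f, g` are summable with
`n ^ α f n → c_f` and `n ^ α g n → c_g`, then `n ^ α (f * g) n → (∑ f) c_g + (∑ g) c_f`:
split the convolution at `N / 2`, so that in each half the factor evaluated near `N` carries the
weight `N ^ α` and dominated convergence applies to the other one. By induction the iterated
convolution has `N ^ α`-limit `∑ x, c x * ∏ y ≠ x, Γ y`, and here `c x = 1` on `S⋆`, where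
`w x n = n ^ (-α)` for `n ≥ 1`, while `c x = 0` off `S⋆`, where `w x` decays geometrically.
-/

lemma sum_range_succ_eq_sum_range_half_add {M : Type*} [AddCommMonoid M] (t : ℕ → M) (N : ℕ) :
    ∑ k ∈ range (N + 1), t k
      = ∑ k ∈ range (N / 2 + 1), t k + ∑ j ∈ range (N - N / 2), t (N - j) := by
  rw [← sum_range_add_sum_Ico t (by omega : N / 2 + 1 ≤ N + 1)]
  congr 1
  refine sum_nbij' (fun k => N - k) (fun j => N - j) ?_ ?_ ?_ ?_ ?_ <;>
    intro k hk <;> simp only [mem_Ico, mem_range] at hk ⊢ <;> first | omega | congr 1; omega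

section RpowTail

variable {α c : ℝ}

lemma tendsto_rpow_mul_comp_sub {g : ℕ → ℝ}
    (hg : Tendsto (fun n : ℕ => (n : ℝ) ^ α * g n) atTop (𝓝 c)) (k : ℕ) :
    Tendsto (fun N : ℕ => (N : ℝ) ^ α * g (N - k)) atTop (𝓝 c) := by
  have hratio : Tendsto (fun n : ℕ => (1 + k / n : ℝ) ^ α) atTop (𝓝 1) := by
    simpa using ((tendsto_const_div_atTop_nhds_zero_nat (k : ℝ)).const_add 1).rpow_const
      (by norm_num)
  have hshift : Tendsto (fun n : ℕ => ((n + k : ℕ) : ℝ) ^ α * g n) atTop (𝓝 c) := by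
    have hprod := hratio.mul hg
    rw [one_mul] at hprod
    refine hprod.congr' ?_
    filter_upwards [eventually_gt_atTop 0] with n hn
    rw [← mul_assoc, ← Real.mul_rpow (by positivity) (by positivity)]
    congr 2
    field_simp
    push_cast
    ring
  refine (hshift.comp (tendsto_sub_atTop_nat k)).congr' ?_
  filter_upwards [eventually_ge_atTop k] with N hN
  simp only [Function.comp_apply, Nat.sub_add_cancel hN]

lemma tendsto_sum_range_mul_rpow_mul_comp_sub (hα : 0 ≤ α) {f g : ℕ → ℝ} (hf : Summable f)
    (hg : Tendsto (fun n : ℕ => (n : ℝ) ^ α * g n) atTop (𝓝 c))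
    {e : ℕ → ℕ} (he : Tendsto e atTop atTop) (he_le : ∀ N, ∀ k < e N, 2 * k ≤ N) :
    Tendsto (fun N : ℕ => ∑ k ∈ range (e N), f k * ((N : ℝ) ^ α * g (N - k)))
      atTop (𝓝 ((∑' k, f k) * c)) := by
  obtain ⟨B, hB⟩ := (tendsto_norm.comp hg).bddAbove_range
  have hbound : ∀ N, ∀ k < e N, ‖(N : ℝ) ^ α * g (N - k)‖ ≤ 2 ^ α * B := by
    intro N k hk
    have hN : (N : ℝ) ≤ 2 * (N - k : ℕ) := by
      have := he_le N k hk
      exact_mod_cast (by omega : N ≤ 2 * (N - k))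
    calc ‖(N : ℝ) ^ α * g (N - k)‖ = (N : ℝ) ^ α * ‖g (N - k)‖ := by
          rw [norm_mul, Real.norm_of_nonneg (by positivity : (0 : ℝ) ≤ (N : ℝ) ^ α)]
      _ ≤ (2 * (N - k : ℕ) : ℝ) ^ α * ‖g (N - k)‖ := by gcongr
      _ = 2 ^ α * ‖((N - k : ℕ) : ℝ) ^ α * g (N - k)‖ := by
          rw [Real.mul_rpow (by norm_num) (by positivity), norm_mul,
            Real.norm_of_nonneg (by positivity : (0 : ℝ) ≤ ((N - k : ℕ) : ℝ) ^ α), mul_assoc]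
      _ ≤ 2 ^ α * B := by gcongr; exact hB ⟨N - k, rfl⟩
  have hsum : ∀ N, ∑ k ∈ range (e N), f k * ((N : ℝ) ^ α * g (N - k))
      = ∑' k, if k < e N then f k * ((N : ℝ) ^ α * g (N - k)) else 0 := by
    intro N
    rw [tsum_eq_sum (s := range (e N)) (fun k hk => by simp_all)]
    exact sum_congr rfl fun k hk => by simp_all
  simp_rw [hsum, ← tsum_mul_right]
  refine tendsto_tsum_of_dominated_convergence (bound := fun k => ‖f k‖ * (2 ^ α * B))
    (hf.abs.mul_right _) (fun k => ?_) (Eventually.of_forall fun N k => ?_)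
  · refine ((tendsto_rpow_mul_comp_sub hg k).const_mul (f k)).congr' ?_
    filter_upwards [he.eventually_gt_atTop k] with N hN
    simp [hN]
  · split_ifs with hk
    · rw [norm_mul]; gcongr; exact hbound N k hk
    · simp only [norm_zero]
      have : 0 ≤ B := (norm_nonneg _).trans (hB ⟨0, rfl⟩)
      positivity

lemma tendsto_rpow_mul_sum_range_mul (hα : 0 ≤ α) {cf cg : ℝ} {f g : ℕ → ℝ}
    (hf : Summable f) (hg : Summable g)
    (hf_tail : Tendsto (fun n : ℕ => (n : ℝ) ^ α * f n) atTop (𝓝 cf))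
    (hg_tail : Tendsto (fun n : ℕ => (n : ℝ) ^ α * g n) atTop (𝓝 cg)) :
    Tendsto (fun N : ℕ => (N : ℝ) ^ α * ∑ k ∈ range (N + 1), f k * g (N - k))
      atTop (𝓝 ((∑' k, f k) * cg + (∑' k, g k) * cf)) := by
  have hsplit : ∀ N : ℕ, (N : ℝ) ^ α * ∑ k ∈ range (N + 1), f k * g (N - k)
      = ∑ k ∈ range (N / 2 + 1), f k * ((N : ℝ) ^ α * g (N - k))
        + ∑ j ∈ range (N - N / 2), g j * ((N : ℝ) ^ α * f (N - j)) := by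
    intro N
    rw [sum_range_succ_eq_sum_range_half_add, mul_add, mul_sum, mul_sum]
    congr 1 <;> refine sum_congr rfl fun k hk => ?_
    · ring
    · rw [Nat.sub_sub_self (by rw [mem_range] at hk; omega)]
      ring
  simp_rw [hsplit]
  have htop : ∀ e : ℕ → ℕ, (∀ N, N / 2 ≤ e N) → Tendsto e atTop atTop := fun e he =>
    tendsto_atTop_mono he (Nat.tendsto_div_const_atTop two_ne_zero)
  exact (tendsto_sum_range_mul_rpow_mul_comp_sub hα hf hg_tail (htop _ fun N => by omega)
    (fun N k hk => by omega)).add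
    (tendsto_sum_range_mul_rpow_mul_comp_sub hα hg hf_tail (htop _ fun N => by omega)
      (fun N k hk => by omega))

end RpowTail

section ConvProd

variable {ι : Type*} (w : ι → ℕ → ℝ)

/-- The `n`-th coefficient of `∏ x ∈ s, ∑ k, w x k * X ^ k`. -/
noncomputable def convProd (s : Finset ι) (n : ℕ) : ℝ :=
  ∑ d ∈ s.piAntidiag n, ∏ x ∈ s, w x (d x)

lemma convProd_empty (n : ℕ) : convProd w ∅ n = if n = 0 then 1 else 0 := by
  rw [convProd, piAntidiag_empty]
  split_ifs <;> simp

lemma convProd_cons {i : ι} {s : Finset ι} (hi : i ∉ s) (n : ℕ) :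
    convProd w (cons i s hi) n = ∑ k ∈ range (n + 1), w i k * convProd w s (n - k) := by
  rw [convProd, piAntidiag_cons hi, sum_disjiUnion,
    ← Nat.sum_antidiagonal_eq_sum_range_succ (fun k l => w i k * convProd w s l)]
  refine sum_congr rfl fun p _ => ?_
  rw [sum_map, convProd, mul_sum]
  refine sum_congr rfl fun d hd => ?_
  have hdi : d i = 0 := by
    by_contra h
    exact hi ((mem_piAntidiag.1 hd).2 i h)
  rw [prod_cons]
  simp only [addRightEmbedding_apply, Pi.add_apply, hdi, if_pos, zero_add]
  congr 1
  refine prod_congr rfl fun x hx => ?_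
  simp [show x ≠ i by rintro rfl; exact hi hx]

variable {w}

lemma hasSum_convProd (hw : ∀ x, Summable (w x)) (s : Finset ι) :
    HasSum (convProd w s) (∏ x ∈ s, ∑' n, w x n) := by
  induction s using Finset.cons_induction with
  | empty =>
    rw [prod_empty, funext (convProd_empty w)]
    exact hasSum_ite_eq 0 1
  | cons i s hi ih =>
    rw [prod_cons, ← ih.tsum_eq, funext (convProd_cons w hi)]
    exact hasSum_sum_range_mul_of_summable_norm (hw i).norm ih.summable.norm

lemma tendsto_rpow_mul_convProd {α : ℝ} (hα : 0 ≤ α) {c : ι → ℝ} (hw : ∀ x, Summable (w x))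
    (hw_tail : ∀ x, Tendsto (fun n : ℕ => (n : ℝ) ^ α * w x n) atTop (𝓝 (c x)))
    (s : Finset ι) :
    Tendsto (fun N : ℕ => (N : ℝ) ^ α * convProd w s N) atTop
      (𝓝 (∑ x ∈ s, c x * ∏ y ∈ s.erase x, ∑' n, w y n)) := by
  induction s using Finset.cons_induction with
  | empty =>
    refine tendsto_const_nhds.congr' ?_
    filter_upwards [eventually_ne_atTop 0] with N hN
    simp [convProd_empty, hN]
  | cons i s hi ih =>
    have hlim := tendsto_rpow_mul_sum_range_mul hα (hw i) (hasSum_convProd hw s).summable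
      (hw_tail i) ih
    simp_rw [← convProd_cons w hi, (hasSum_convProd hw s).tsum_eq] at hlim
    convert hlim using 2
    rw [sum_cons, erase_cons, mul_sum, add_comm, mul_comm]
    congr 1
    refine sum_congr rfl fun x hx => ?_
    rw [erase_cons_of_ne, prod_cons]
    · ring
    · rintro rfl; exact hi hx

end ConvProd

lemma prod_erase_eq_pow_mul_prod_compl {ι M : Type*} [Fintype ι] [DecidableEq ι] [CommMonoid M]
    {s : Finset ι} {x : ι} (hx : x ∈ s) {f : ι → M} {a : M} (hf : ∀ y ∈ s, f y = a) :
    ∏ y ∈ univ.erase x, f y = a ^ (#s - 1) * ∏ y ∈ sᶜ, f y := by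
  rw [← prod_filter_mul_prod_filter_not (univ.erase x) (· ∈ s)]
  have hin : (univ.erase x).filter (· ∈ s) = s.erase x := by ext; simp [and_comm]
  have hout : (univ.erase x).filter (· ∉ s) = sᶜ := by
    ext y; simp only [mem_filter, mem_erase, mem_univ, mem_compl]; grind
  rw [hin, hout, prod_congr rfl fun y hy => hf y (mem_of_mem_erase hy), prod_const,
    card_erase_of_mem hx]

lemma aZR_of_ne_zero {α : ℝ} {n : ℕ} (hn : n ≠ 0) : aZR α n = (n : ℝ) ^ α := if_neg hn

lemma summable_pow_div_aZR {α : ℝ} (hα : 1 < α) {r : ℝ} (hr : |r| ≤ 1) :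
    Summable fun n : ℕ => r ^ n / aZR α n := by
  refine .of_norm_bounded_eventually_nat (Real.summable_one_div_nat_rpow.2 hα) ?_
  filter_upwards [eventually_ne_atTop 0] with n hn
  rw [aZR_of_ne_zero hn, norm_div, norm_pow, Real.norm_eq_abs,
    Real.norm_of_nonneg (by positivity)]
  gcongr
  exact pow_le_one₀ (abs_nonneg r) hr

lemma tendsto_rpow_mul_pow_div_aZR (α : ℝ) {r : ℝ} (hr₀ : 0 ≤ r) (hr₁ : r ≤ 1) :
    Tendsto (fun n : ℕ => (n : ℝ) ^ α * (r ^ n / aZR α n)) atTop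
      (𝓝 (if r = 1 then 1 else 0)) := by
  have hpow : (fun n : ℕ => (n : ℝ) ^ α * (r ^ n / aZR α n)) =ᶠ[atTop] fun n => r ^ n := by
    filter_upwards [eventually_ne_atTop 0] with n hn
    rw [aZR_of_ne_zero hn, mul_div_cancel₀ _ (by positivity)]
  refine Tendsto.congr' hpow.symm ?_
  split_ifs with hr
  · simp [hr]
  · exact tendsto_pow_atTop_nhds_zero_of_lt_one hr₀ (hr₁.lt_of_ne hr)

lemma configs_eq_piAntidiag (S : Type*) [Fintype S] (N : ℕ) :
    configs S N = univ.piAntidiag N := by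
  ext η
  simp only [configs, mem_filter, Fintype.mem_piFinset, mem_range, mem_piAntidiag, mem_univ,
    implies_true, and_true, and_iff_right_iff_imp]
  intro hη x
  have := hη ▸ single_le_sum (fun y _ => Nat.zero_le (η y)) (mem_univ x)
  omega

theorem stmt_0_general {S : Type*} [Fintype S] (α : ℝ) (hα : 2 < α)
    (m : S → ℝ) (hm : ∀ x, 0 < m x)
    (Mstar : ℝ) (hMstar : IsGreatest (Set.range m) Mstar)
    (Sstar : Finset S) (hSstar : Sstar = Finset.univ.filter fun x => m x = Mstar)
    (mstar : S → ℝ) (hmstar : ∀ x, mstar x = m x / Mstar)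
    (Γ : S → ℝ) (hΓ : ∀ x, Γ x = ∑' j : ℕ, mstar x ^ j / aZR α j)
    (Γα : ℝ) (hΓα : Γα = ∑' j : ℕ, 1 / aZR α j)
    (Z : ℕ → ℝ)
    (hZ : ∀ N, Z N = (N : ℝ) ^ α *
      ∑ η ∈ configs S N, (∏ x, mstar x ^ η x) / ∏ x, aZR α (η x)) :
    Filter.Tendsto Z Filter.atTop
      (nhds ((Sstar.card : ℝ) * Γα ^ (Sstar.card - 1) * ∏ x ∈ Sstarᶜ, Γ x)) := by
  have hMpos : 0 < Mstar := by
    obtain ⟨x, hx⟩ := hMstar.1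
    exact hx ▸ hm x
  have hmstar_mem : ∀ x, 0 ≤ mstar x ∧ mstar x ≤ 1 := fun x => by
    rw [hmstar]
    exact ⟨(div_pos (hm x) hMpos).le, (div_le_one hMpos).2 (hMstar.2 ⟨x, rfl⟩)⟩
  have hmstar_eq_one : ∀ x, mstar x = 1 ↔ x ∈ Sstar := fun x => by
    simp [hmstar, div_eq_one_iff_eq hMpos.ne', hSstar]
  set w : S → ℕ → ℝ := fun x j => mstar x ^ j / aZR α j
  have hw_tail : ∀ x, Tendsto (fun n : ℕ => (n : ℝ) ^ α * w x n) atTop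
      (𝓝 (if x ∈ Sstar then 1 else 0)) := fun x => by
    simpa only [hmstar_eq_one] using
      tendsto_rpow_mul_pow_div_aZR α (hmstar_mem x).1 (hmstar_mem x).2
  have hZ_conv : Z = fun N : ℕ => (N : ℝ) ^ α * convProd w univ N := by
    ext N
    rw [hZ, configs_eq_piAntidiag, convProd]
    simp only [w, prod_div_distrib]
  have hlimit : ∑ x, (if x ∈ Sstar then 1 else 0) * ∏ y ∈ univ.erase x, ∑' n, w y n
      = (#Sstar : ℝ) * Γα ^ (#Sstar - 1) * ∏ x ∈ Sstarᶜ, Γ x := by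
    have hΓ_star : ∀ y ∈ Sstar, Γ y = Γα := fun y hy => by
      simp [hΓ, hΓα, (hmstar_eq_one y).2 hy]
    simp only [w, ← hΓ, ite_mul, one_mul, zero_mul, sum_ite_mem, univ_inter]
    rw [sum_congr rfl fun x hx => prod_erase_eq_pow_mul_prod_compl hx hΓ_star, sum_const,
      nsmul_eq_mul, mul_assoc]
  rw [hZ_conv, ← hlimit]
  exact tendsto_rpow_mul_convProd (by linarith) (fun x => summable_pow_div_aZR (by linarith)
    (abs_le.2 ⟨by linarith [(hmstar_mem x).1], (hmstar_mem x).2⟩)) hw_tail univ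

theorem stmt_0 {S : Type*} [Fintype S] (α : ℝ) (hα : 2 < α)
    (m : S → ℝ) (hm : ∀ x, 0 < m x)
    (Mstar : ℝ) (hMstar : IsGreatest (Set.range m) Mstar)
    (Sstar : Finset S) (hSstar : Sstar = Finset.univ.filter fun x => m x = Mstar)
    (hκ : 2 ≤ Sstar.card)
    (mstar : S → ℝ) (hmstar : ∀ x, mstar x = m x / Mstar)
    (Γ : S → ℝ) (hΓ : ∀ x, Γ x = ∑' j : ℕ, mstar x ^ j / aZR α j)
    (Γα : ℝ) (hΓα : Γα = ∑' j : ℕ, 1 / aZR α j)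
    (Z : ℕ → ℝ)
    (hZ : ∀ N, Z N = (N : ℝ) ^ α *
      ∑ η ∈ configs S N, (∏ x, mstar x ^ η x) / ∏ x, aZR α (η x)) :
    Filter.Tendsto Z Filter.atTop
      (nhds ((Sstar.card : ℝ) * Γα ^ (Sstar.card - 1) * ∏ x ∈ Sstarᶜ, Γ x)) :=
  stmt_0_general α hα m hm Mstar hMstar Sstar hSstar mstar hmstar Γ hΓ Γα hΓα Z hZ
end

section
/- Comparison of non-reversible and symmetrized capacities: there exists a constant C₀ > 0, depending only on S, r and m, such that for every N ≥ 1 and all disjoint nonempty 𝒜, ℬ ⊆ H_N one has cap_N^s(𝒜,ℬ) ≤ cap_N(𝒜,ℬ) ≤ C₀ · cap_N^s(𝒜,ℬ). -/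
open Filter Topology Finset
open scoped Classical

noncomputable section

/-- `g(0)=0`, `g(n)=a(n)/a(n-1)` for `n ≥ 1`. -/
def gZR (α : ℝ) (n : ℕ) : ℝ := if n = 0 then 0 else aZR α n / aZR α (n - 1)

/-- `σ^{x,y} η`: move one particle from `x` to `y` (identity if `x = y` or `η x = 0`). -/
def move {S : Type*} (x y : S) (η : S → ℕ) : S → ℕ :=
  if x = y ∨ η x = 0 then η
  else Function.update (Function.update η x (η x - 1)) y (η y + 1)

/-- The zero-range generator with jump rates `r`. -/
def LgenR {S : Type*} [Fintype S] (α : ℝ) (r : S → S → ℝ)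
    (f : (S → ℕ) → ℝ) (η : S → ℕ) : ℝ :=
  ∑ x, ∑ y, gZR α (η x) * r x y * (f (move x y η) - f η)

/-- The Dirichlet form of the zero-range process. -/
def DirN {S : Type*} [Fintype S] (α : ℝ) (r : S → S → ℝ)
    (μ : (S → ℕ) → ℝ) (N : ℕ) (f : (S → ℕ) → ℝ) : ℝ :=
  (1 / 2) * ∑ η ∈ configs S N, ∑ x, ∑ y,
    μ η * gZR α (η x) * r x y * (f (move x y η) - f η) ^ 2

end

/-! Write a configuration of `N` particles as `ζ + δₓ` with `ζ` a configuration of `N - 1`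
particles. The product form of `μ_N` turns `μ_N(η) g(η_x)` into `μ_N(ζ) m⋆(x)`, so the Dirichlet
form and the pairings `⟨u, 𝓛_N f⟩` become sums over `ζ` of one-particle quantities for the chain
with rates `ρ(x, y) = m⋆(x) r(x, y)`, whose invariant measure is uniform. Its symmetric part gives
the energy `E`, its antisymmetric part a form `A` with `|A(u, f)| ≤ C √E(u) √E(f)` (sector
condition); `C` only depends on the one-particle chain, because `A` does not see constants and `E`
controls oscillations along paths of positive rates.

With `u = h - hˢ`, which vanishes on `𝒜 ∪ ℬ`, harmonicity gives `E(u, hˢ) = 0`, hence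
`E(h) = E(hˢ) + E(u) ≥ E(hˢ)`, and `E(u, h) = A(u, h)`, hence
`E(h) = E(hˢ) - A(hˢ, h) ≤ E(hˢ) + C √E(hˢ) √E(h)`, that is `E(h) ≤ (1 + C)² E(hˢ)`. -/

noncomputable section

namespace ZeroRange

open Matrix

variable {S : Type*}

section Sector

variable {V V' : Type*} [AddCommGroup V] [Module ℝ V] [AddCommGroup V'] [Module ℝ V']

def SectorBound (A E : LinearMap.BilinForm ℝ V) (C : ℝ) : Prop :=
  ∀ u f, |A u f| ≤ C * (√(E u u) * √(E f f))

lemma SectorBound.compl₁₂ {A E : LinearMap.BilinForm ℝ V} {C : ℝ} (h : SectorBound A E C)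
    (g : V' →ₗ[ℝ] V) : SectorBound (A.compl₁₂ g g) (E.compl₁₂ g g) C :=
  fun u f => h (g u) (g f)

lemma SectorBound.sum {ι : Type*} (s : Finset ι) {w : ι → ℝ} (hw : ∀ i, 0 ≤ w i)
    {A E : ι → LinearMap.BilinForm ℝ V} (hE : ∀ i u, 0 ≤ E i u u) {C : ℝ} (hC : 0 ≤ C)
    (h : ∀ i, SectorBound (A i) (E i) C) :
    SectorBound (∑ i ∈ s, w i • A i) (∑ i ∈ s, w i • E i) C := by
  intro u f
  simp only [LinearMap.BilinForm.sum_apply, LinearMap.smul_apply, smul_eq_mul]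
  calc |∑ i ∈ s, w i * A i u f|
      ≤ ∑ i ∈ s, w i * (C * (√(E i u u) * √(E i f f))) := by
        refine (Finset.abs_sum_le_sum_abs _ _).trans (Finset.sum_le_sum fun i _ => ?_)
        rw [abs_mul, abs_of_nonneg (hw i)]
        exact mul_le_mul_of_nonneg_left (h i u f) (hw i)
    _ = C * ∑ i ∈ s, √(w i * E i u u) * √(w i * E i f f) := by
        rw [Finset.mul_sum]
        refine Finset.sum_congr rfl fun i _ => ?_
        rw [Real.sqrt_mul (hw i), Real.sqrt_mul (hw i)]
        linear_combination (C * √(E i u u) * √(E i f f)) * (Real.mul_self_sqrt (hw i)).symm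
    _ ≤ C * (√(∑ i ∈ s, w i * E i u u) * √(∑ i ∈ s, w i * E i f f)) :=
        mul_le_mul_of_nonneg_left (Real.sum_sqrt_mul_sqrt_le s
          (fun i => mul_nonneg (hw i) (hE i u)) (fun i => mul_nonneg (hw i) (hE i f))) hC

theorem le_and_le_of_sectorBound {E A : LinearMap.BilinForm ℝ V}
    (hE : ∀ u f, E u f = E f u) (hE₀ : ∀ f, 0 ≤ E f f) (hA : ∀ f, A f f = 0)
    {C : ℝ} (hC : 0 ≤ C) (hsector : SectorBound A E C) {h hs : V}
    (horth : E (h - hs) hs = 0) (hharm : E (h - hs) h = A (h - hs) h) :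
    E hs hs ≤ E h h ∧ E h h ≤ (1 + C) ^ 2 * E hs hs := by
  have hexpand : E h h = E hs hs + E (h - hs) (h - hs) := by
    simp only [map_sub, LinearMap.sub_apply, hE hs h] at horth ⊢
    linarith
  refine ⟨by linarith [hE₀ (h - hs)], ?_⟩
  have hcross : E h h = E hs hs - A hs h := by
    simp only [map_sub, LinearMap.sub_apply, hA, hE hs h] at horth hharm ⊢
    linarith
  set a := √(E hs hs)
  set b := √(E h h)
  have ha : 0 ≤ a := Real.sqrt_nonneg _
  have hb : 0 ≤ b := Real.sqrt_nonneg _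
  rw [← Real.sq_sqrt (hE₀ h), ← Real.sq_sqrt (hE₀ hs)] at hcross ⊢
  have hba : b ^ 2 ≤ a ^ 2 + C * (a * b) := by
    linarith [neg_abs_le (A hs h), hsector hs h]
  -- `b ≤ (1 + C) a`, since otherwise `b (b - C a) > a²`
  have : b ≤ (1 + C) * a := by
    by_contra! hlt
    nlinarith [mul_nonneg hC ha]
  nlinarith

end Sector

section OneParticle

variable [Fintype S]

def edgeForm (ρ : S → S → ℝ) : LinearMap.BilinForm ℝ (S → ℝ) :=
  let grad (x y : S) : (S → ℝ) →ₗ[ℝ] ℝ :=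
    LinearMap.proj (R := ℝ) (φ := fun _ => ℝ) y - LinearMap.proj (R := ℝ) (φ := fun _ => ℝ) x
  ∑ x, ∑ y, ρ x y • (LinearMap.mul ℝ ℝ).compl₁₂ (grad x y) (grad x y)

lemma edgeForm_apply (ρ : S → S → ℝ) (F G : S → ℝ) :
    edgeForm ρ F G = ∑ x, ∑ y, ρ x y * ((F y - F x) * (G y - G x)) := by
  simp [edgeForm, ← sub_mul]

def skewForm (ρ : S → S → ℝ) : LinearMap.BilinForm ℝ (S → ℝ) :=
  toBilin' (of fun x y => ρ x y - ρ y x)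

lemma skewForm_apply (ρ : S → S → ℝ) (F G : S → ℝ) :
    skewForm ρ F G = ∑ x, ∑ y, F x * (ρ x y - ρ y x) * G y := by
  simp [skewForm, toBilin'_apply]

lemma skewForm_self (ρ : S → S → ℝ) (F : S → ℝ) : skewForm ρ F F = 0 := by
  set T := ∑ x, ∑ y, F x * (ρ x y - ρ y x) * F y
  have : T = -T := calc
    T = ∑ y, ∑ x, F x * (ρ x y - ρ y x) * F y := Finset.sum_comm
    _ = ∑ y, ∑ x, -(F y * (ρ y x - ρ x y) * F x) := by congr! 2; ring
    _ = -T := by simp only [Finset.sum_neg_distrib, T]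
  rw [skewForm_apply]
  linarith

lemma edgeForm_self_nonneg {ρ : S → S → ℝ} (hρ : ∀ x y, 0 ≤ ρ x y) (F : S → ℝ) :
    0 ≤ edgeForm ρ F F := by
  rw [edgeForm_apply]
  exact Finset.sum_nonneg fun x _ => Finset.sum_nonneg fun y _ =>
    mul_nonneg (hρ x y) (mul_self_nonneg _)

lemma edgeForm_symm (ρ : S → S → ℝ) (F G : S → ℝ) : edgeForm ρ F G = edgeForm ρ G F := by
  simp only [edgeForm_apply, mul_comm (F _ - F _)]

lemma mul_sq_le_edgeForm {ρ : S → S → ℝ} (hρ : ∀ x y, 0 ≤ ρ x y) (F : S → ℝ) (x y : S) :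
    ρ x y * (F y - F x) ^ 2 ≤ edgeForm ρ F F := by
  have hterm : ∀ a b, 0 ≤ ρ a b * ((F b - F a) * (F b - F a)) :=
    fun a b => mul_nonneg (hρ a b) (mul_self_nonneg _)
  rw [edgeForm_apply, sq]
  calc ρ x y * ((F y - F x) * (F y - F x))
      ≤ ∑ b, ρ x b * ((F b - F x) * (F b - F x)) :=
        Finset.single_le_sum (fun b _ => hterm x b) (Finset.mem_univ y)
    _ ≤ _ := Finset.single_le_sum (f := fun a => ∑ b, ρ a b * ((F b - F a) * (F b - F a)))
        (fun a _ => Finset.sum_nonneg fun b _ => hterm a b) (Finset.mem_univ x)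

lemma exists_abs_sub_le_sqrt_edgeForm {ρ : S → S → ℝ} (hρ : ∀ x y, 0 ≤ ρ x y) {x y : S}
    (hxy : Relation.ReflTransGen (fun a b => 0 < ρ a b) x y) :
    ∃ K, 0 ≤ K ∧ ∀ F : S → ℝ, |F y - F x| ≤ K * √(edgeForm ρ F F) := by
  induction hxy with
  | refl => exact ⟨0, le_rfl, fun F => by simp⟩
  | @tail b c _ hbc ih =>
    obtain ⟨K, hK, hF⟩ := ih
    refine ⟨K + √(ρ b c)⁻¹, by positivity, fun F => ?_⟩
    have hstep : |F c - F b| ≤ √(ρ b c)⁻¹ * √(edgeForm ρ F F) := by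
      rw [← Real.sqrt_mul (by positivity)]
      refine Real.abs_le_sqrt ?_
      rw [← div_eq_inv_mul, le_div_iff₀ hbc, mul_comm]
      exact mul_sq_le_edgeForm hρ F b c
    calc |F c - F x| ≤ |F c - F b| + |F b - F x| := abs_sub_le _ _ _
      _ ≤ _ := by linarith [hF F]

theorem exists_sectorBound_toBilin' {ρ : S → S → ℝ} (hρ : ∀ x y, 0 ≤ ρ x y)
    (hirr : ∀ x y, Relation.ReflTransGen (fun a b => 0 < ρ a b) x y)
    {c : Matrix S S ℝ} (hrow : ∀ x, ∑ y, c x y = 0) (hcol : ∀ y, ∑ x, c x y = 0) :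
    ∃ C, 0 ≤ C ∧ SectorBound (toBilin' c) (edgeForm ρ) C := by
  rcases isEmpty_or_nonempty S with _ | ⟨⟨x₀⟩⟩
  · exact ⟨0, le_rfl, fun F G => by simp [toBilin'_apply]⟩
  choose K hK hosc using fun x => exists_abs_sub_le_sqrt_edgeForm hρ (hirr x₀ x)
  refine ⟨∑ x, ∑ y, |c x y| * K x * K y, Finset.sum_nonneg fun x _ => Finset.sum_nonneg
    fun y _ => mul_nonneg (mul_nonneg (abs_nonneg _) (hK x)) (hK y), fun F G => ?_⟩
  have hconst_left (G : S → ℝ) : toBilin' c 1 G = 0 := by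
    simp [toBilin'_apply, Finset.sum_comm (γ := S), ← Finset.sum_mul, hcol]
  have hconst_right (F : S → ℝ) : toBilin' c F 1 = 0 := by
    simp [toBilin'_apply, ← Finset.mul_sum, hrow]
  -- the form does not see constants, so `F` and `G` may be centred at `x₀`
  have hcenter : toBilin' c F G = toBilin' c (F - F x₀ • 1) (G - G x₀ • 1) := by
    simp [hconst_left, hconst_right]
  rw [hcenter, toBilin'_apply, Finset.sum_mul]
  refine (Finset.abs_sum_le_sum_abs _ _).trans (Finset.sum_le_sum fun x _ => ?_)
  rw [Finset.sum_mul]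
  refine (Finset.abs_sum_le_sum_abs _ _).trans (Finset.sum_le_sum fun y _ => ?_)
  have hFx : |F x - F x₀| ≤ K x * √(edgeForm ρ F F) := hosc x F
  have hGy : |G y - G x₀| ≤ K y * √(edgeForm ρ G G) := hosc y G
  simp only [Pi.sub_apply, Pi.smul_apply, Pi.one_apply, smul_eq_mul, mul_one, abs_mul]
  calc |F x - F x₀| * |c x y| * |G y - G x₀|
      ≤ (K x * √(edgeForm ρ F F)) * |c x y| * (K y * √(edgeForm ρ G G)) := by
        gcongr
        exact mul_nonneg (mul_nonneg (hK x) (Real.sqrt_nonneg _)) (abs_nonneg _)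
    _ = _ := by ring

def genPairing (ρ : S → S → ℝ) (F G : S → ℝ) : ℝ := ∑ x, ∑ y, ρ x y * F x * (G y - G x)

lemma genPairing_add_transpose (ρ : S → S → ℝ) (F G : S → ℝ) :
    genPairing ρ F G + genPairing (fun x y => ρ y x) F G = -edgeForm ρ F G := by
  have hswap : genPairing (fun x y => ρ y x) F G = ∑ x, ∑ y, ρ x y * F y * (G x - G y) :=
    Finset.sum_comm
  rw [hswap, genPairing, edgeForm_apply, ← Finset.sum_add_distrib, ← Finset.sum_neg_distrib]
  refine Finset.sum_congr rfl fun x _ => ?_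
  rw [← Finset.sum_add_distrib, ← Finset.sum_neg_distrib]
  exact Finset.sum_congr rfl fun y _ => by ring

lemma genPairing_sub_transpose {ρ : S → S → ℝ} (hbal : ∀ x, ∑ y, ρ x y = ∑ y, ρ y x)
    (F G : S → ℝ) :
    genPairing ρ F G - genPairing (fun x y => ρ y x) F G = skewForm ρ F G := by
  rw [genPairing, genPairing, ← Finset.sum_sub_distrib, skewForm_apply]
  refine Finset.sum_congr rfl fun x _ => ?_
  have hx : ∑ y, (ρ x y - ρ y x) = 0 := by rw [Finset.sum_sub_distrib, hbal, sub_self]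
  calc ∑ y, ρ x y * F x * (G y - G x) - ∑ y, ρ y x * F x * (G y - G x)
      = ∑ y, F x * (ρ x y - ρ y x) * G y - F x * G x * ∑ y, (ρ x y - ρ y x) := by
        rw [Finset.mul_sum, ← Finset.sum_sub_distrib, ← Finset.sum_sub_distrib]
        exact Finset.sum_congr rfl fun y _ => by ring
    _ = _ := by rw [hx, mul_zero, sub_zero]

lemma genPairing_of_balanced {ρ : S → S → ℝ} (hbal : ∀ x, ∑ y, ρ x y = ∑ y, ρ y x)
    (F G : S → ℝ) : genPairing ρ F G = (skewForm ρ F G - edgeForm ρ F G) / 2 := by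
  linarith [genPairing_add_transpose ρ F G, genPairing_sub_transpose hbal F G]

lemma genPairing_symmetrized (ρ : S → S → ℝ) (F G : S → ℝ) :
    genPairing (fun x y => (ρ x y + ρ y x) / 2) F G = -edgeForm ρ F G / 2 := by
  rw [← genPairing_add_transpose, genPairing, genPairing, genPairing, ← Finset.sum_add_distrib,
    Finset.sum_div]
  refine Finset.sum_congr rfl fun x _ => ?_
  rw [← Finset.sum_add_distrib, Finset.sum_div]
  exact Finset.sum_congr rfl fun y _ => by ring

theorem exists_sectorBound_skewForm {ρ : S → S → ℝ} (hρ : ∀ x y, 0 ≤ ρ x y)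
    (hirr : ∀ x y, Relation.ReflTransGen (fun a b => 0 < ρ a b) x y)
    (hbal : ∀ x, ∑ y, ρ x y = ∑ y, ρ y x) :
    ∃ C, 0 ≤ C ∧ SectorBound (skewForm ρ) (edgeForm ρ) C :=
  exists_sectorBound_toBilin' hρ hirr
    (fun x => by simp [Finset.sum_sub_distrib, hbal])
    (fun y => by simp [Finset.sum_sub_distrib, hbal])

end OneParticle

lemma sub_single_add_single {η : S → ℕ} {x : S} (hx : η x ≠ 0) :
    η - Pi.single x 1 + Pi.single x 1 = η := by
  funext u
  by_cases hu : u = x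
  · subst hu; simp; omega
  · simp [hu]

lemma move_add_single (x y : S) (ζ : S → ℕ) :
    move x y (ζ + Pi.single x 1) = ζ + Pi.single y 1 := by
  by_cases hxy : x = y
  · simp [move, hxy]
  funext u
  by_cases hux : u = x <;> by_cases huy : u = y <;>
    simp [move, hxy, hux, huy]

section Configurations

variable [Fintype S] {α : ℝ} {μ : (S → ℕ) → ℝ} {ms : S → ℝ}

lemma mem_configs {N : ℕ} {η : S → ℕ} : η ∈ configs S N ↔ ∑ x, η x = N := by
  simp only [configs, Finset.mem_filter, Fintype.mem_piFinset, Finset.mem_range,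
    and_iff_right_iff_imp]
  intro h x
  have := Finset.single_le_sum (fun i _ => Nat.zero_le (η i)) (Finset.mem_univ x)
  omega

lemma add_single_mem_configs_iff {M : ℕ} {ζ : S → ℕ} {x : S} :
    ζ + Pi.single x 1 ∈ configs S (M + 1) ↔ ζ ∈ configs S M := by
  simp [mem_configs, Finset.sum_add_distrib]

lemma aZR_pos (α : ℝ) (n : ℕ) : 0 < aZR α n := by
  unfold aZR
  split_ifs with hn
  · exact one_pos
  · exact Real.rpow_pos_of_pos (Nat.cast_pos.mpr (Nat.pos_of_ne_zero hn)) α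

lemma prod_pow_div_prod_aZR_nonneg (hms : ∀ x, 0 ≤ ms x) (η : S → ℕ) :
    0 ≤ (∏ x, ms x ^ η x) / ∏ x, aZR α (η x) :=
  div_nonneg (Finset.prod_nonneg fun x _ => pow_nonneg (hms x) _)
    (Finset.prod_nonneg fun _ _ => (aZR_pos α _).le)

lemma nonneg_of_product {K Z : ℝ}
    (hμ : ∀ η, μ η = K * (∏ x, ms x ^ η x) / (Z * ∏ x, aZR α (η x)))
    (hK : 0 ≤ K) (hZ : 0 ≤ Z) (hms : ∀ x, 0 ≤ ms x) (η : S → ℕ) : 0 ≤ μ η := by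
  rw [hμ, mul_div_mul_comm]
  exact mul_nonneg (div_nonneg hK hZ) (prod_pow_div_prod_aZR_nonneg hms η)

theorem add_single_mul_gZR_of_product {K Z : ℝ}
    (hμ : ∀ η, μ η = K * (∏ x, ms x ^ η x) / (Z * ∏ x, aZR α (η x))) (ζ : S → ℕ) (x : S) :
    μ (ζ + Pi.single x 1) * gZR α (ζ x + 1) = μ ζ * ms x := by
  have hform : ∀ η, μ η = K / Z * ∏ u, ms u ^ η u / aZR α (η u) := by
    intro η
    rw [hμ, Finset.prod_div_distrib]
    ring
  have hsite : ms x ^ (ζ x + 1) / aZR α (ζ x + 1) * gZR α (ζ x + 1)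
      = ms x ^ ζ x / aZR α (ζ x) * ms x := by
    have h₀ := (aZR_pos α (ζ x)).ne'
    have h₁ := (aZR_pos α (ζ x + 1)).ne'
    rw [gZR, if_neg (Nat.succ_ne_zero _), Nat.add_sub_cancel]
    field_simp
    ring
  have hrest : ∏ u ∈ Finset.univ.erase x,
        ms u ^ (ζ + Pi.single x 1 : S → ℕ) u / aZR α ((ζ + Pi.single x 1 : S → ℕ) u)
      = ∏ u ∈ Finset.univ.erase x, ms u ^ ζ u / aZR α (ζ u) :=
    Finset.prod_congr rfl fun u hu => by simp [Finset.ne_of_mem_erase hu]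
  rw [hform, hform, ← Finset.mul_prod_erase _ _ (Finset.mem_univ x),
    ← Finset.mul_prod_erase _ _ (Finset.mem_univ x), hrest]
  simp only [Pi.add_apply, Pi.single_eq_same]
  linear_combination (K / Z * ∏ u ∈ Finset.univ.erase x, ms u ^ ζ u / aZR α (ζ u)) * hsite

-- `η ↦ η - δₓ` is a bijection from `{η ∈ H_{M+1} : η x ≠ 0}` onto `H_M`.
theorem sum_configs_succ_mul_gZR {M : ℕ}
    (hμ : ∀ ζ x, μ (ζ + Pi.single x 1) * gZR α (ζ x + 1) = μ ζ * ms x)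
    (Φ : (S → ℕ) → S → ℝ) :
    ∑ η ∈ configs S (M + 1), ∑ x, μ η * gZR α (η x) * Φ η x
      = ∑ ζ ∈ configs S M, ∑ x, μ ζ * ms x * Φ (ζ + Pi.single x 1) x := by
  rw [Finset.sum_comm, Finset.sum_comm (s := configs S M)]
  refine Finset.sum_congr rfl fun x _ => ?_
  rw [← Finset.sum_filter_of_ne (p := fun η => η x ≠ 0)
    (fun η _ hne hx => hne (by simp [hx, gZR]))]
  refine Finset.sum_nbij' (· - Pi.single x 1) (· + Pi.single x 1) ?_ ?_ ?_ ?_ ?_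
  · intro η hη
    rw [Finset.mem_filter] at hη
    rw [← add_single_mem_configs_iff, sub_single_add_single hη.2]
    exact hη.1
  · intro ζ hζ
    simpa [add_single_mem_configs_iff] using hζ
  · intro η hη
    exact sub_single_add_single (Finset.mem_filter.mp hη).2
  · intro ζ _
    exact add_tsub_cancel_right ζ _
  · intro η hη
    obtain ⟨ζ, rfl⟩ : ∃ ζ : S → ℕ, η = ζ + Pi.single x 1 :=
      ⟨_, (sub_single_add_single (Finset.mem_filter.mp hη).2).symm⟩
    rw [add_tsub_cancel_right, Pi.add_apply, Pi.single_eq_same, hμ]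

def configForm (μ : (S → ℕ) → ℝ) (M : ℕ) (B : LinearMap.BilinForm ℝ (S → ℝ)) :
    LinearMap.BilinForm ℝ ((S → ℕ) → ℝ) :=
  let profile (ζ : S → ℕ) := LinearMap.funLeft ℝ ℝ fun x => ζ + Pi.single x 1
  ∑ ζ ∈ configs S M, μ ζ • B.compl₁₂ (profile ζ) (profile ζ)

lemma configForm_apply (μ : (S → ℕ) → ℝ) (M : ℕ) (B : LinearMap.BilinForm ℝ (S → ℝ))
    (u f : (S → ℕ) → ℝ) :
    configForm μ M B u f = ∑ ζ ∈ configs S M,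
      μ ζ * B (fun x => u (ζ + Pi.single x 1)) (fun x => f (ζ + Pi.single x 1)) := by
  simp only [configForm, LinearMap.BilinForm.sum_apply, LinearMap.smul_apply,
    LinearMap.compl₁₂_apply, smul_eq_mul]
  rfl

theorem sum_mul_LgenR {M : ℕ} (hμ : ∀ ζ x, μ (ζ + Pi.single x 1) * gZR α (ζ x + 1) = μ ζ * ms x)
    (q : S → S → ℝ) (u f : (S → ℕ) → ℝ) :
    ∑ η ∈ configs S (M + 1), μ η * u η * LgenR α q f η
      = ∑ ζ ∈ configs S M, μ ζ * genPairing (fun x y => ms x * q x y)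
          (fun x => u (ζ + Pi.single x 1)) (fun x => f (ζ + Pi.single x 1)) := by
  have hlocal : ∀ η, μ η * u η * LgenR α q f η
      = ∑ x, μ η * gZR α (η x) * (u η * ∑ y, q x y * (f (move x y η) - f η)) := by
    intro η
    simp only [LgenR, Finset.mul_sum]
    exact Finset.sum_congr rfl fun x _ => Finset.sum_congr rfl fun y _ => by ring
  rw [Finset.sum_congr rfl fun η _ => hlocal η, sum_configs_succ_mul_gZR hμ]
  simp only [move_add_single, genPairing, Finset.mul_sum]
  exact Finset.sum_congr rfl fun ζ _ => Finset.sum_congr rfl fun x _ =>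
    Finset.sum_congr rfl fun y _ => by ring

theorem DirN_eq_configForm {M : ℕ}
    (hμ : ∀ ζ x, μ (ζ + Pi.single x 1) * gZR α (ζ x + 1) = μ ζ * ms x)
    (q : S → S → ℝ) (f : (S → ℕ) → ℝ) :
    DirN α q μ (M + 1) f = configForm μ M (edgeForm fun x y => ms x * q x y) f f / 2 := by
  have hlocal : ∀ η, ∑ x, ∑ y, μ η * gZR α (η x) * q x y * (f (move x y η) - f η) ^ 2
      = ∑ x, μ η * gZR α (η x) * ∑ y, q x y * (f (move x y η) - f η) ^ 2 := by
    intro η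
    simp only [Finset.mul_sum]
    exact Finset.sum_congr rfl fun x _ => Finset.sum_congr rfl fun y _ => by ring
  rw [DirN, Finset.sum_congr rfl fun η _ => hlocal η, sum_configs_succ_mul_gZR hμ]
  simp only [move_add_single, configForm_apply, edgeForm_apply, Finset.mul_sum, Finset.sum_div]
  exact Finset.sum_congr rfl fun ζ _ => Finset.sum_congr rfl fun x _ =>
    Finset.sum_congr rfl fun y _ => by ring

theorem sum_mul_LgenR_of_balanced {M : ℕ}
    (hμ : ∀ ζ x, μ (ζ + Pi.single x 1) * gZR α (ζ x + 1) = μ ζ * ms x)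
    {q : S → S → ℝ} (hbal : ∀ x, ∑ y, ms x * q x y = ∑ y, ms y * q y x) (u f : (S → ℕ) → ℝ) :
    ∑ η ∈ configs S (M + 1), μ η * u η * LgenR α q f η
      = (configForm μ M (skewForm fun x y => ms x * q x y) u f
          - configForm μ M (edgeForm fun x y => ms x * q x y) u f) / 2 := by
  simp only [sum_mul_LgenR hμ, genPairing_of_balanced hbal, configForm_apply,
    ← Finset.sum_sub_distrib, Finset.sum_div]
  exact Finset.sum_congr rfl fun ζ _ => by ring

theorem sum_mul_LgenR_of_symmetrized {M : ℕ}
    (hμ : ∀ ζ x, μ (ζ + Pi.single x 1) * gZR α (ζ x + 1) = μ ζ * ms x)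
    {q ρ : S → S → ℝ} (hq : ∀ x y, ms x * q x y = (ρ x y + ρ y x) / 2) (u f : (S → ℕ) → ℝ) :
    ∑ η ∈ configs S (M + 1), μ η * u η * LgenR α q f η
      = -configForm μ M (edgeForm ρ) u f / 2 := by
  simp only [sum_mul_LgenR hμ, hq, genPairing_symmetrized, configForm_apply,
    ← Finset.sum_neg_distrib, Finset.sum_div]
  exact Finset.sum_congr rfl fun ζ _ => by ring

lemma configForm_symm {B : LinearMap.BilinForm ℝ (S → ℝ)} (hB : ∀ F G, B F G = B G F)
    (M : ℕ) (u f : (S → ℕ) → ℝ) : configForm μ M B u f = configForm μ M B f u := by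
  simp only [configForm_apply]
  exact Finset.sum_congr rfl fun ζ _ => by rw [hB]

lemma configForm_self_nonneg (hμ : ∀ ζ, 0 ≤ μ ζ) {B : LinearMap.BilinForm ℝ (S → ℝ)}
    (hB : ∀ F, 0 ≤ B F F) (M : ℕ) (f : (S → ℕ) → ℝ) : 0 ≤ configForm μ M B f f := by
  rw [configForm_apply]
  exact Finset.sum_nonneg fun ζ _ => mul_nonneg (hμ ζ) (hB _)

lemma configForm_skewForm_self (ρ : S → S → ℝ) (M : ℕ) (f : (S → ℕ) → ℝ) :
    configForm μ M (skewForm ρ) f f = 0 := by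
  simp [configForm_apply, skewForm_self]

lemma SectorBound.configForm (hμ : ∀ ζ, 0 ≤ μ ζ) {A E : LinearMap.BilinForm ℝ (S → ℝ)}
    (hE : ∀ F, 0 ≤ E F F) {C : ℝ} (hC : 0 ≤ C) (h : SectorBound A E C) (M : ℕ) :
    SectorBound (configForm μ M A) (configForm μ M E) C := by
  unfold ZeroRange.configForm
  refine SectorBound.sum _ hμ ?_ hC fun _ => h.compl₁₂ _
  exact fun _ _ => hE _

lemma sum_mul_LgenR_eq_zero_of_harmonic {N : ℕ} {A B : Finset (S → ℕ)} {q : S → S → ℝ}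
    {u f : (S → ℕ) → ℝ} (hA : ∀ η ∈ A, u η = 0) (hB : ∀ η ∈ B, u η = 0)
    (hf : ∀ η ∈ configs S N, η ∉ A → η ∉ B → LgenR α q f η = 0) :
    ∑ η ∈ configs S N, μ η * u η * LgenR α q f η = 0 := by
  refine Finset.sum_eq_zero fun η hη => ?_
  by_cases hηA : η ∈ A
  · simp [hA η hηA]
  by_cases hηB : η ∈ B
  · simp [hB η hηB]
  simp [hf η hη hηA hηB]

theorem exists_capacity_comparison {q qs : S → S → ℝ} (hms : ∀ x, 0 < ms x)
    (hq : ∀ x y, 0 ≤ q x y) (hirr : ∀ x y, Relation.ReflTransGen (fun a b => 0 < q a b) x y)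
    (hbal : ∀ x, ∑ y, ms x * q x y = ∑ y, ms y * q y x)
    (hqs : ∀ x y, ms x * qs x y = (ms x * q x y + ms y * q y x) / 2) :
    ∃ C, 0 ≤ C ∧ ∀ μ : (S → ℕ) → ℝ, (∀ η, 0 ≤ μ η) →
      (∀ ζ x, μ (ζ + Pi.single x 1) * gZR α (ζ x + 1) = μ ζ * ms x) →
      ∀ (M : ℕ) (A B : Finset (S → ℕ)) (h hs : (S → ℕ) → ℝ),
        (∀ η ∈ A, h η = hs η) → (∀ η ∈ B, h η = hs η) →
        (∀ η ∈ configs S (M + 1), η ∉ A → η ∉ B → LgenR α q h η = 0) →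
        (∀ η ∈ configs S (M + 1), η ∉ A → η ∉ B → LgenR α qs hs η = 0) →
        DirN α q μ (M + 1) hs ≤ DirN α q μ (M + 1) h ∧
          DirN α q μ (M + 1) h ≤ (1 + C) ^ 2 * DirN α q μ (M + 1) hs := by
  set ρ : S → S → ℝ := fun x y => ms x * q x y
  have hρ (x y : S) : 0 ≤ ρ x y := mul_nonneg (hms x).le (hq x y)
  have hρirr (x y : S) : Relation.ReflTransGen (fun a b => 0 < ρ a b) x y :=
    Relation.ReflTransGen.mono (fun a _ hab => mul_pos (hms a) hab) x y (hirr x y)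
  obtain ⟨C, hC, hsector⟩ := exists_sectorBound_skewForm hρ hρirr hbal
  refine ⟨C, hC, fun μ hμ₀ hμ M A B h hs hA hB hharm hsharm => ?_⟩
  have hdiffA (η) (hη : η ∈ A) : (h - hs) η = 0 := sub_eq_zero.mpr (hA η hη)
  have hdiffB (η) (hη : η ∈ B) : (h - hs) η = 0 := sub_eq_zero.mpr (hB η hη)
  have horth := sum_mul_LgenR_eq_zero_of_harmonic (μ := μ) hdiffA hdiffB hsharm
  have hcross := sum_mul_LgenR_eq_zero_of_harmonic (μ := μ) hdiffA hdiffB hharm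
  rw [sum_mul_LgenR_of_symmetrized hμ hqs] at horth
  rw [sum_mul_LgenR_of_balanced hμ hbal] at hcross
  have hcomp := le_and_le_of_sectorBound (configForm_symm (edgeForm_symm ρ) M)
    (configForm_self_nonneg hμ₀ (edgeForm_self_nonneg hρ) M) (configForm_skewForm_self ρ M) hC
    (hsector.configForm hμ₀ (edgeForm_self_nonneg hρ) hC M)
    (h := h) (hs := hs) (by linarith) (by linarith)
  rw [DirN_eq_configForm hμ, DirN_eq_configForm hμ]
  constructor <;> linarith [hcomp.1, hcomp.2]

end Configurations

end ZeroRange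

end

open ZeroRange

theorem stmt_3_general {S : Type*} [Fintype S] (α : ℝ)
    (r : S → S → ℝ) (hr0 : ∀ x y, 0 ≤ r x y)
    (hirr : ∀ x y : S, Relation.ReflTransGen (fun a b => 0 < r a b) x y)
    (m : S → ℝ) (hm : ∀ x, 0 < m x)
    (hinv : ∀ x, ∑ y, m x * r x y = ∑ y, m y * r y x)
    (Mstar : ℝ) (hMstar : IsGreatest (Set.range m) Mstar)
    (mstar : S → ℝ) (hmstar : ∀ x, mstar x = m x / Mstar)
    (Z : ℕ → ℝ)
    (hZ : ∀ N, Z N = (N : ℝ) ^ α *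
      ∑ η ∈ configs S N, (∏ x, mstar x ^ η x) / ∏ x, aZR α (η x))
    (μ : ℕ → (S → ℕ) → ℝ)
    (hμ : ∀ N η, μ N η =
      (N : ℝ) ^ α * (∏ x, mstar x ^ η x) / (Z N * ∏ x, aZR α (η x)))
    (rstar : S → S → ℝ) (hrstar : ∀ x y, rstar x y = r y x * m y / m x)
    (rsym : S → S → ℝ) (hrsym : ∀ x y, rsym x y = (r x y + rstar x y) / 2) :
    ∃ C : ℝ, 0 < C ∧ ∀ N : ℕ, 1 ≤ N → ∀ A B : Finset (S → ℕ),
      A ⊆ configs S N → B ⊆ configs S N → Disjoint A B →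
      A.Nonempty → B.Nonempty →
      ∀ h hs : (S → ℕ) → ℝ,
        (∀ η ∈ A, h η = 1) → (∀ η ∈ B, h η = 0) →
        (∀ η ∈ configs S N, η ∉ A → η ∉ B → LgenR α r h η = 0) →
        (∀ η ∈ A, hs η = 1) → (∀ η ∈ B, hs η = 0) →
        (∀ η ∈ configs S N, η ∉ A → η ∉ B → LgenR α rsym hs η = 0) →
        DirN α r (μ N) N hs ≤ DirN α r (μ N) N h ∧
          DirN α r (μ N) N h ≤ C * DirN α r (μ N) N hs := by
  obtain ⟨x₀, hx₀⟩ := hMstar.1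
  have hmstar_pos (x : S) : 0 < mstar x := by
    rw [hmstar]
    exact div_pos (hm x) (hx₀ ▸ hm x₀)
  have hbal (x : S) : ∑ y, mstar x * r x y = ∑ y, mstar y * r y x := by
    simp only [hmstar, div_mul_eq_mul_div, ← Finset.sum_div, hinv]
  have hsym (x y : S) : mstar x * rsym x y = (mstar x * r x y + mstar y * r y x) / 2 := by
    have := (hm x).ne'
    simp only [hrsym, hrstar, hmstar]
    field_simp
  obtain ⟨C, hC, hcomp⟩ := exists_capacity_comparison hmstar_pos hr0 hirr hbal hsym
  refine ⟨(1 + C) ^ 2, by positivity, ?_⟩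
  rintro N hN A B - - - - - h hs hA hB hharm hsA hsB hsharm
  obtain ⟨M, rfl⟩ : ∃ M, N = M + 1 := ⟨N - 1, by omega⟩
  have hZ₀ : 0 ≤ Z (M + 1) := by
    rw [hZ]
    exact mul_nonneg (by positivity) (Finset.sum_nonneg fun η _ =>
      prod_pow_div_prod_aZR_nonneg (fun x => (hmstar_pos x).le) η)
  exact hcomp (μ (M + 1))
    (nonneg_of_product (hμ (M + 1)) (by positivity) hZ₀ fun x => (hmstar_pos x).le)
    (add_single_mul_gZR_of_product (hμ (M + 1))) M A B h hs
    (fun η hη => by rw [hA η hη, hsA η hη]) (fun η hη => by rw [hB η hη, hsB η hη])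
    hharm hsharm

theorem stmt_3 {S : Type*} [Fintype S] (α : ℝ) (hα : 2 < α)
    (r : S → S → ℝ) (hr0 : ∀ x y, 0 ≤ r x y) (hrdiag : ∀ x, r x x = 0)
    (hirr : ∀ x y : S, Relation.ReflTransGen (fun a b => 0 < r a b) x y)
    (m : S → ℝ) (hm : ∀ x, 0 < m x)
    (hinv : ∀ x, ∑ y, m x * r x y = ∑ y, m y * r y x)
    (Mstar : ℝ) (hMstar : IsGreatest (Set.range m) Mstar)
    (Sstar : Finset S) (hSstar : Sstar = Finset.univ.filter fun x => m x = Mstar)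
    (hκ : 2 ≤ Sstar.card)
    (mstar : S → ℝ) (hmstar : ∀ x, mstar x = m x / Mstar)
    (Z : ℕ → ℝ)
    (hZ : ∀ N, Z N = (N : ℝ) ^ α *
      ∑ η ∈ configs S N, (∏ x, mstar x ^ η x) / ∏ x, aZR α (η x))
    (μ : ℕ → (S → ℕ) → ℝ)
    (hμ : ∀ N η, μ N η =
      (N : ℝ) ^ α * (∏ x, mstar x ^ η x) / (Z N * ∏ x, aZR α (η x)))
    (rstar : S → S → ℝ) (hrstar : ∀ x y, rstar x y = r y x * m y / m x)
    (rsym : S → S → ℝ) (hrsym : ∀ x y, rsym x y = (r x y + rstar x y) / 2) :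
    ∃ C : ℝ, 0 < C ∧ ∀ N : ℕ, 1 ≤ N → ∀ A B : Finset (S → ℕ),
      A ⊆ configs S N → B ⊆ configs S N → Disjoint A B →
      A.Nonempty → B.Nonempty →
      ∀ h hs : (S → ℕ) → ℝ,
        (∀ η ∈ A, h η = 1) → (∀ η ∈ B, h η = 0) →
        (∀ η ∈ configs S N, η ∉ A → η ∉ B → LgenR α r h η = 0) →
        (∀ η ∈ A, hs η = 1) → (∀ η ∈ B, hs η = 0) →
        (∀ η ∈ configs S N, η ∉ A → η ∉ B → LgenR α rsym hs η = 0) →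
        DirN α r (μ N) N hs ≤ DirN α r (μ N) N h ∧
          DirN α r (μ N) N h ≤ C * DirN α r (μ N) N hs :=
  stmt_3_general α r hr0 hirr m hm hinv Mstar hMstar mstar hmstar Z hZ μ hμ rstar hrstar rsym hrsym
end

section
/- Generalized Thomson principle (lower bound without divergence-free test flows): let 𝒜, ℬ ⊆ H_N be disjoint and nonempty, let h be the equilibrium potential between 𝒜 and ℬ and cap_N(𝒜,ℬ) = 𝒟_N(h). Then for every real number ε, every function g : H_N → ℝ vanishing on 𝒜 ∪ ℬ, and every flow ψ with (div ψ)(𝒜) = 1 + ε, one has (1 + ε + Σ_{η ∉ 𝒜∪ℬ} h(η)(div ψ)(η))² ≤ cap_N(𝒜,ℬ) · ‖Φ_g − ψ‖²; in particular cap_N(𝒜,ℬ) · ‖Φ_g − ψ‖² ≥ 1 + 2ε + 2 Σ_{η ∉ 𝒜∪ℬ} h(η)(div ψ)(η). -/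
open Filter Topology Finset
open scoped Classical

noncomputable section

/-- Adjacency `η ∼ ζ` on `H_N`. -/
def AdjZR {S : Type*} (r : S → S → ℝ) (η ζ : S → ℕ) : Prop :=
  ∃ x y : S, x ≠ y ∧ 1 ≤ η x ∧ 0 < r x y + r y x ∧ ζ = move x y η

/-- Conductance `c_N(η,ζ)`. -/
def condZR {S : Type*} [Fintype S] (α : ℝ) (r : S → S → ℝ) (μ : (S → ℕ) → ℝ)
    (η ζ : S → ℕ) : ℝ :=
  ∑ x, ∑ y, if x ≠ y ∧ 1 ≤ η x ∧ ζ = move x y η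
    then μ η * gZR α (η x) * r x y else 0

/-- Symmetrized conductance `c_N^s(η,ζ)`. -/
def csymZR {S : Type*} [Fintype S] (α : ℝ) (r : S → S → ℝ) (μ : (S → ℕ) → ℝ)
    (η ζ : S → ℕ) : ℝ :=
  (condZR α r μ η ζ + condZR α r μ ζ η) / 2

/-- The flow `Φ_f` associated with a function `f`. -/
def PhiF {S : Type*} [Fintype S] (α : ℝ) (r : S → S → ℝ) (μ : (S → ℕ) → ℝ)
    (f : (S → ℕ) → ℝ) (η ζ : S → ℕ) : ℝ :=
  f η * condZR α r μ η ζ - f ζ * condZR α r μ ζ η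

/-- Squared flow norm `‖φ‖²`. -/
def flowNormSq (S : Type*) [Fintype S] (α : ℝ) (r : S → S → ℝ) (μ : (S → ℕ) → ℝ)
    (N : ℕ) (φ : (S → ℕ) → (S → ℕ) → ℝ) : ℝ :=
  (1 / 2) * ∑ η ∈ configs S N, ∑ ζ ∈ configs S N,
    if AdjZR r η ζ then (φ η ζ) ^ 2 / csymZR α r μ η ζ else 0

/-- Divergence of a flow at a configuration. -/
def divFlow (S : Type*) [Fintype S] (r : S → S → ℝ) (N : ℕ)
    (φ : (S → ℕ) → (S → ℕ) → ℝ) (η : S → ℕ) : ℝ :=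
  ∑ ζ ∈ configs S N, if AdjZR r η ζ then φ η ζ else 0

end

/-!
Write `φ = Φ_g - ψ`. Summation by parts turns `∑_{η∼ζ} (h η - h ζ) φ(η,ζ)` into
`2 ∑_η h η (div φ)(η)`. The `Φ_g` part vanishes, because `∑_η h η (div Φ_g)(η) =
-∑_η g η μ_N(η) (𝓛_N h)(η)` and `g` vanishes on `𝒜 ∪ ℬ` while `h` is harmonic off it; the `ψ` part
is `1 + ε + ∑_{η ∉ 𝒜∪ℬ} h η (div ψ)(η)` since `h` is `1` on `𝒜` and `0` on `ℬ`. Cauchy–Schwarz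
with weights `c_N^s` bounds the square of the pairing by `2 cap_N(𝒜,ℬ) · 2 ‖φ‖²`. The second
inequality is `x² ≥ 2x - 1`.
-/

section Network

variable {β : Type*} {V : Finset β} {adj : β → β → Prop}

theorem sum_sum_ite_adj_swap (hadj : ∀ a b, adj a b → adj b a) (F : β → β → ℝ) :
    ∑ a ∈ V, ∑ b ∈ V, (if adj a b then F b a else 0) =
      ∑ a ∈ V, ∑ b ∈ V, (if adj a b then F a b else 0) := by
  rw [sum_comm]
  exact sum_congr rfl fun a _ => sum_congr rfl fun b _ => by
    simp only [show adj b a ↔ adj a b from ⟨hadj b a, hadj a b⟩]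

theorem sum_sum_ite_adj_sub_mul (hadj : ∀ a b, adj a b → adj b a) (f : β → ℝ)
    {φ : β → β → ℝ} (hφ : ∀ a b, φ a b = -φ b a) :
    ∑ a ∈ V, ∑ b ∈ V, (if adj a b then (f a - f b) * φ a b else 0) =
      2 * ∑ a ∈ V, f a * ∑ b ∈ V, (if adj a b then φ a b else 0) := by
  have hswap := sum_sum_ite_adj_swap (V := V) hadj fun a b => f a * φ a b
  calc _ = ∑ a ∈ V, ∑ b ∈ V, ((if adj a b then f a * φ a b else 0) +
          if adj a b then f b * φ b a else 0) := by
        refine sum_congr rfl fun a _ => sum_congr rfl fun b _ => ?_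
        split_ifs
        · rw [hφ a b]; ring
        · simp
    _ = _ := by
      simp only [sum_add_distrib, hswap, mul_sum, mul_ite, mul_zero, ← two_mul]

theorem sum_mul_sum_ite_adj_flow (hadj : ∀ a b, adj a b → adj b a) (f g : β → ℝ)
    (c : β → β → ℝ) :
    ∑ a ∈ V, f a * ∑ b ∈ V, (if adj a b then g a * c a b - g b * c b a else 0) =
      -∑ a ∈ V, g a * ∑ b ∈ V, (if adj a b then c a b * (f b - f a) else 0) := by
  have hswap := sum_sum_ite_adj_swap (V := V) hadj fun a b => f b * (g a * c a b)
  have hsplit : ∀ F G : β → β → ℝ, ∑ a ∈ V, ∑ b ∈ V, (if adj a b then F a b - G a b else 0) =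
      ∑ a ∈ V, ∑ b ∈ V, (if adj a b then F a b else 0) -
        ∑ a ∈ V, ∑ b ∈ V, (if adj a b then G a b else 0) := fun F G => by
    simp only [← sum_sub_distrib, ite_sub_ite, sub_zero]
  calc _ = ∑ a ∈ V, ∑ b ∈ V,
          (if adj a b then f a * (g a * c a b) - f a * (g b * c b a) else 0) := by
        simp only [mul_sum, mul_ite, mul_zero, mul_sub]
    _ = -∑ a ∈ V, ∑ b ∈ V,
          (if adj a b then f b * (g a * c a b) - f a * (g a * c a b) else 0) := by
        rw [hsplit, hsplit, ← hswap]; ring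
    _ = _ := by
        congr 1
        refine sum_congr rfl fun a _ => ?_
        rw [mul_sum]
        exact sum_congr rfl fun b _ => by split_ifs <;> ring

theorem sq_sum_sum_ite_adj_mul_le {w : β → β → ℝ} (hw : ∀ a b, adj a b → 0 < w a b)
    (u v : β → β → ℝ) :
    (∑ a ∈ V, ∑ b ∈ V, if adj a b then u a b * v a b else 0) ^ 2 ≤
      (∑ a ∈ V, ∑ b ∈ V, if adj a b then w a b * u a b ^ 2 else 0) *
        ∑ a ∈ V, ∑ b ∈ V, if adj a b then v a b ^ 2 / w a b else 0 := by
  simp only [← sum_product']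
  refine sum_sq_le_sum_mul_sum_of_sq_le_mul _ (fun p _ => ?_) (fun p _ => ?_) fun p _ => ?_
  all_goals split_ifs with hp
  · exact mul_nonneg (hw _ _ hp).le (sq_nonneg _)
  · exact le_rfl
  · exact div_nonneg (sq_nonneg _) (hw _ _ hp).le
  · exact le_rfl
  · exact le_of_eq (by field_simp [(hw _ _ hp).ne'])
  · simp

theorem sum_mul_eq_sum_add_sum_sdiff [DecidableEq β] {A B : Finset β} (hAB : A ∪ B ⊆ V)
    (hdisj : Disjoint A B) {f : β → ℝ} (hf1 : ∀ a ∈ A, f a = 1) (hf0 : ∀ b ∈ B, f b = 0)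
    (u : β → ℝ) :
    ∑ a ∈ V, f a * u a = ∑ a ∈ A, u a + ∑ a ∈ V \ (A ∪ B), f a * u a := by
  rw [← sum_sdiff hAB, sum_union hdisj,
    sum_congr rfl fun a (ha : a ∈ A) => by rw [hf1 a ha, one_mul],
    sum_eq_zero fun b (hb : b ∈ B) => by rw [hf0 b hb, zero_mul]]
  ring

end Network

section ZeroRange

variable {S : Type*}

theorem mem_configs [Fintype S] {N : ℕ} {η : S → ℕ} : η ∈ configs S N ↔ ∑ x, η x = N := by
  simp only [configs, mem_filter, Fintype.mem_piFinset, mem_range, and_iff_right_iff_imp]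
  rintro rfl x
  exact Nat.lt_succ_of_le (single_le_sum (fun _ _ => Nat.zero_le _) (mem_univ x))

section Move

variable {x y : S} {η : S → ℕ}

theorem move_apply_fst (hxy : x ≠ y) (hx : 1 ≤ η x) : move x y η x = η x - 1 := by
  rw [move, if_neg (not_or.2 ⟨hxy, by omega⟩), Function.update_of_ne hxy, Function.update_self]

theorem move_apply_snd (hxy : x ≠ y) (hx : 1 ≤ η x) : move x y η y = η y + 1 := by
  rw [move, if_neg (not_or.2 ⟨hxy, by omega⟩), Function.update_self]

theorem move_apply_of_ne {z : S} (hzx : z ≠ x) (hzy : z ≠ y) : move x y η z = η z := by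
  unfold move
  split_ifs
  · rfl
  · rw [Function.update_of_ne hzy, Function.update_of_ne hzx]

theorem move_add_single (hxy : x ≠ y) (hx : 1 ≤ η x) :
    move x y η + Pi.single x 1 = η + Pi.single y 1 := by
  funext z
  rcases eq_or_ne z x with rfl | hzx
  · rw [Pi.add_apply, Pi.add_apply, move_apply_fst hxy hx, Pi.single_eq_same,
      Pi.single_eq_of_ne hxy]
    omega
  rcases eq_or_ne z y with rfl | hzy
  · simp [move_apply_snd hxy hx, hzx]
  · simp [move_apply_of_ne hzx hzy, hzx, hzy]

theorem sum_move [Fintype S] : ∑ z, move x y η z = ∑ z, η z := by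
  by_cases hc : x = y ∨ η x = 0
  · rw [move, if_pos hc]
  · rw [not_or] at hc
    have h := congrArg (fun f : S → ℕ => ∑ z, f z)
      (move_add_single hc.1 (Nat.one_le_iff_ne_zero.2 hc.2))
    simpa [sum_add_distrib] using h

theorem move_mem_configs [Fintype S] {N : ℕ} (hη : η ∈ configs S N) :
    move x y η ∈ configs S N := by
  rw [mem_configs, sum_move]
  exact mem_configs.1 hη

theorem move_move (hxy : x ≠ y) (hx : 1 ≤ η x) : move y x (move x y η) = η := by
  have hy : 1 ≤ move x y η y := by rw [move_apply_snd hxy hx]; omega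
  funext z
  rcases eq_or_ne z x with rfl | hzx
  · rw [move_apply_snd hxy.symm hy, move_apply_fst hxy hx]; omega
  rcases eq_or_ne z y with rfl | hzy
  · rw [move_apply_fst hxy.symm hy, move_apply_snd hxy hx]; omega
  · rw [move_apply_of_ne hzy hzx, move_apply_of_ne hzx hzy]

end Move

theorem AdjZR.symm {r : S → S → ℝ} {η ζ : S → ℕ} (h : AdjZR r η ζ) : AdjZR r ζ η := by
  obtain ⟨x, y, hxy, hx, hr, rfl⟩ := h
  exact ⟨y, x, hxy.symm, by rw [move_apply_snd hxy hx]; omega, by linarith,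
    (move_move hxy hx).symm⟩

theorem aZR_pos (α : ℝ) (n : ℕ) : 0 < aZR α n := by
  unfold aZR
  split_ifs
  · exact one_pos
  · positivity

theorem gZR_nonneg (α : ℝ) (n : ℕ) : 0 ≤ gZR α n := by
  unfold gZR
  split_ifs
  · exact le_rfl
  · exact (div_pos (aZR_pos α n) (aZR_pos α _)).le

theorem gZR_pos (α : ℝ) {n : ℕ} (hn : 1 ≤ n) : 0 < gZR α n := by
  rw [gZR, if_neg (by omega : n ≠ 0)]
  exact div_pos (aZR_pos α n) (aZR_pos α _)

variable [Fintype S] {α : ℝ} {r : S → S → ℝ} {μ : (S → ℕ) → ℝ}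

theorem condZR_nonneg (hr0 : ∀ x y, 0 ≤ r x y) (hμ : ∀ η, 0 ≤ μ η) (η ζ : S → ℕ) :
    0 ≤ condZR α r μ η ζ :=
  sum_nonneg fun x _ => sum_nonneg fun y _ => by
    split_ifs
    · exact mul_nonneg (mul_nonneg (hμ η) (gZR_nonneg α _)) (hr0 x y)
    · exact le_rfl

theorem le_condZR_move (hr0 : ∀ x y, 0 ≤ r x y) (hμ : ∀ η, 0 ≤ μ η) {x y : S} {η : S → ℕ}
    (hxy : x ≠ y) (hx : 1 ≤ η x) :
    μ η * gZR α (η x) * r x y ≤ condZR α r μ η (move x y η) := by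
  have hterm : ∀ x' y', 0 ≤ if x' ≠ y' ∧ 1 ≤ η x' ∧ move x y η = move x' y' η
      then μ η * gZR α (η x') * r x' y' else 0 := fun x' y' => by
    split_ifs
    · exact mul_nonneg (mul_nonneg (hμ η) (gZR_nonneg α _)) (hr0 x' y')
    · exact le_rfl
  calc μ η * gZR α (η x) * r x y
      = if x ≠ y ∧ 1 ≤ η x ∧ move x y η = move x y η
          then μ η * gZR α (η x) * r x y else 0 := (if_pos ⟨hxy, hx, rfl⟩).symm
    _ ≤ _ := single_le_sum (fun y' _ => hterm x y') (mem_univ y)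
    _ ≤ _ := single_le_sum (fun x' _ => sum_nonneg fun y' _ => hterm x' y') (mem_univ x)

theorem csymZR_pos (hr0 : ∀ x y, 0 ≤ r x y) (hμ : ∀ η, 0 < μ η) {η ζ : S → ℕ}
    (h : AdjZR r η ζ) : 0 < csymZR α r μ η ζ := by
  obtain ⟨x, y, hxy, hx, hr, rfl⟩ := h
  have hμ' : ∀ η, 0 ≤ μ η := fun η => (hμ η).le
  have hy : 1 ≤ move x y η y := by rw [move_apply_snd hxy hx]; omega
  have hfwd := le_condZR_move (α := α) hr0 hμ' hxy hx
  have hbwd := le_condZR_move (α := α) hr0 hμ' hxy.symm hy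
  rw [move_move hxy hx] at hbwd
  have hfwd₀ := condZR_nonneg (α := α) hr0 hμ' η (move x y η)
  have hbwd₀ := condZR_nonneg (α := α) hr0 hμ' (move x y η) η
  unfold csymZR
  rcases lt_or_ge 0 (r x y) with hxy_pos | hxy_nonpos
  · have := mul_pos (mul_pos (hμ η) (gZR_pos α hx)) hxy_pos
    linarith
  · have := mul_pos (mul_pos (hμ (move x y η)) (gZR_pos α hy)) (by linarith : 0 < r y x)
    linarith

theorem condZR_eq_zero_of_not_adjZR (hr0 : ∀ x y, 0 ≤ r x y) {η ζ : S → ℕ}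
    (h : ¬AdjZR r η ζ) : condZR α r μ η ζ = 0 :=
  sum_eq_zero fun x _ => sum_eq_zero fun y _ => by
    split_ifs with hc
    · have hr : r x y = 0 := le_antisymm
        (not_lt.1 fun hr => h ⟨x, y, hc.1, hc.2.1, by linarith [hr0 y x], hc.2.2⟩) (hr0 x y)
      rw [hr, mul_zero]
    · rfl

theorem sum_adjZR_condZR_mul (hr0 : ∀ x y, 0 ≤ r x y) (hrdiag : ∀ x, r x x = 0) {N : ℕ}
    {η : S → ℕ} (hη : η ∈ configs S N) (F : (S → ℕ) → ℝ) :
    ∑ ζ ∈ configs S N, (if AdjZR r η ζ then condZR α r μ η ζ * F ζ else 0) =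
      ∑ x, ∑ y, μ η * gZR α (η x) * r x y * F (move x y η) := by
  have hdrop : ∀ ζ, (if AdjZR r η ζ then condZR α r μ η ζ * F ζ else 0) =
      condZR α r μ η ζ * F ζ := fun ζ => by
    split_ifs with h
    · rfl
    · rw [condZR_eq_zero_of_not_adjZR hr0 h, zero_mul]
  rw [sum_congr rfl fun ζ _ => hdrop ζ]
  simp only [condZR, sum_mul, ite_mul, zero_mul]
  rw [sum_comm]
  refine sum_congr rfl fun x _ => ?_
  rw [sum_comm]
  refine sum_congr rfl fun y _ => ?_
  by_cases hc : x ≠ y ∧ 1 ≤ η x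
  · simp [hc.1, hc.2, move_mem_configs hη]
  · have hgr : gZR α (η x) * r x y = 0 := by
      rcases not_and_or.1 hc with hxy | hx
      · rw [not_not.1 hxy, hrdiag, mul_zero]
      · rw [gZR, if_pos (by omega), zero_mul]
    rw [sum_eq_zero fun ζ _ => if_neg fun h => hc ⟨h.1, h.2.1⟩, mul_assoc (μ η), hgr]
    ring

theorem sum_adjZR_condZR_mul_sub (hr0 : ∀ x y, 0 ≤ r x y) (hrdiag : ∀ x, r x x = 0) {N : ℕ}
    {η : S → ℕ} (hη : η ∈ configs S N) (f : (S → ℕ) → ℝ) :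
    ∑ ζ ∈ configs S N, (if AdjZR r η ζ then condZR α r μ η ζ * (f ζ - f η) else 0) =
      μ η * LgenR α r f η := by
  rw [sum_adjZR_condZR_mul hr0 hrdiag hη fun ζ => f ζ - f η, LgenR, mul_sum]
  exact sum_congr rfl fun x _ => by
    rw [mul_sum]
    exact sum_congr rfl fun y _ => by ring

theorem DirN_eq_sum_adjZR_csymZR (hr0 : ∀ x y, 0 ≤ r x y) (hrdiag : ∀ x, r x x = 0) (N : ℕ)
    (f : (S → ℕ) → ℝ) :
    DirN α r μ N f = (1 / 2) * ∑ η ∈ configs S N, ∑ ζ ∈ configs S N,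
      (if AdjZR r η ζ then csymZR α r μ η ζ * (f η - f ζ) ^ 2 else 0) := by
  have hswap := sum_sum_ite_adj_swap (V := configs S N) (adj := AdjZR r) (fun _ _ => AdjZR.symm)
    fun η ζ => condZR α r μ η ζ * (f ζ - f η) ^ 2
  have hsym : ∑ η ∈ configs S N, ∑ ζ ∈ configs S N,
      (if AdjZR r η ζ then csymZR α r μ η ζ * (f η - f ζ) ^ 2 else 0) =
        ∑ η ∈ configs S N, ∑ ζ ∈ configs S N,
          (if AdjZR r η ζ then condZR α r μ η ζ * (f ζ - f η) ^ 2 else 0) := by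
    calc _ = ∑ η ∈ configs S N, ∑ ζ ∈ configs S N,
          ((1 / 2) * (if AdjZR r η ζ then condZR α r μ η ζ * (f ζ - f η) ^ 2 else 0) +
            (1 / 2) * if AdjZR r η ζ then condZR α r μ ζ η * (f η - f ζ) ^ 2 else 0) := by
          refine sum_congr rfl fun η _ => sum_congr rfl fun ζ _ => ?_
          unfold csymZR
          split_ifs <;> ring
      _ = _ := by
          simp only [sum_add_distrib, ← mul_sum, hswap]
          ring
  rw [hsym, DirN]
  congr 1
  exact sum_congr rfl fun η hη => (sum_adjZR_condZR_mul hr0 hrdiag hη fun ζ => (f ζ - f η) ^ 2).symm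

theorem divFlow_sub (N : ℕ) (φ χ : (S → ℕ) → (S → ℕ) → ℝ) (η : S → ℕ) :
    divFlow S r N (fun η ζ => φ η ζ - χ η ζ) η = divFlow S r N φ η - divFlow S r N χ η := by
  simp only [divFlow, ← sum_sub_distrib, ite_sub_ite, sub_zero]

theorem sum_mul_divFlow_PhiF_eq_zero (hr0 : ∀ x y, 0 ≤ r x y) (hrdiag : ∀ x, r x x = 0)
    {N : ℕ} {f g : (S → ℕ) → ℝ} (hgf : ∀ η ∈ configs S N, g η ≠ 0 → LgenR α r f η = 0) :
    ∑ η ∈ configs S N, f η * divFlow S r N (PhiF α r μ g) η = 0 := by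
  simp only [divFlow, PhiF]
  rw [sum_mul_sum_ite_adj_flow fun _ _ => AdjZR.symm, neg_eq_zero]
  refine sum_eq_zero fun η hη => ?_
  rw [sum_adjZR_condZR_mul_sub hr0 hrdiag hη]
  by_cases hg : g η = 0
  · rw [hg, zero_mul]
  · rw [hgf η hη hg, mul_zero, mul_zero]

theorem sum_adjZR_sub_mul_PhiF_sub (hr0 : ∀ x y, 0 ≤ r x y) (hrdiag : ∀ x, r x x = 0)
    {N : ℕ} {f g : (S → ℕ) → ℝ} (hgf : ∀ η ∈ configs S N, g η ≠ 0 → LgenR α r f η = 0)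
    {ψ : (S → ℕ) → (S → ℕ) → ℝ} (hψ : ∀ η ζ, ψ η ζ = -ψ ζ η) :
    ∑ η ∈ configs S N, ∑ ζ ∈ configs S N,
      (if AdjZR r η ζ then (f η - f ζ) * (PhiF α r μ g η ζ - ψ η ζ) else 0) =
        -2 * ∑ η ∈ configs S N, f η * divFlow S r N ψ η := by
  rw [sum_sum_ite_adj_sub_mul (fun _ _ => AdjZR.symm) f fun η ζ => by
    rw [hψ η ζ, PhiF, PhiF]; ring]
  show 2 * ∑ η ∈ configs S N, f η * divFlow S r N (fun η ζ => PhiF α r μ g η ζ - ψ η ζ) η = _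
  simp only [divFlow_sub, mul_sub, sum_sub_distrib, sum_mul_divFlow_PhiF_eq_zero hr0 hrdiag hgf]
  ring

end ZeroRange

theorem zeroRangeMeasure_pos {S : Type*} [Fintype S] {mstar : S → ℝ} (hm : ∀ x, 0 < mstar x)
    {N : ℕ} (hN : 1 ≤ N) (hne : (configs S N).Nonempty) (α : ℝ) (η : S → ℕ) :
    0 < (N : ℝ) ^ α * (∏ x, mstar x ^ η x) /
      (((N : ℝ) ^ α * ∑ ζ ∈ configs S N, (∏ x, mstar x ^ ζ x) / ∏ x, aZR α (ζ x)) *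
        ∏ x, aZR α (η x)) := by
  have hweight : ∀ ζ : S → ℕ, 0 < (∏ x, mstar x ^ ζ x) / ∏ x, aZR α (ζ x) := fun ζ =>
    div_pos (prod_pos fun x _ => pow_pos (hm x) _) (prod_pos fun x _ => aZR_pos α _)
  have hNα : (0 : ℝ) < (N : ℝ) ^ α := Real.rpow_pos_of_pos (by exact_mod_cast hN) α
  rw [mul_div_mul_comm]
  exact mul_pos (div_pos hNα (mul_pos hNα (sum_pos (fun ζ _ => hweight ζ) hne))) (hweight η)

theorem stmt_5_general {S : Type*} [Fintype S] (α : ℝ)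
    (r : S → S → ℝ) (hr0 : ∀ x y, 0 ≤ r x y) (hrdiag : ∀ x, r x x = 0)
    (m : S → ℝ) (hm : ∀ x, 0 < m x)
    (Mstar : ℝ) (hMstar : IsGreatest (Set.range m) Mstar)
    (mstar : S → ℝ) (hmstar : ∀ x, mstar x = m x / Mstar)
    (Z : ℕ → ℝ)
    (hZ : ∀ N, Z N = (N : ℝ) ^ α *
      ∑ η ∈ configs S N, (∏ x, mstar x ^ η x) / ∏ x, aZR α (η x))
    (μ : ℕ → (S → ℕ) → ℝ)
    (hμ : ∀ N η, μ N η =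
      (N : ℝ) ^ α * (∏ x, mstar x ^ η x) / (Z N * ∏ x, aZR α (η x)))
    (N : ℕ) (hN : 1 ≤ N)
    (A B : Finset (S → ℕ)) (hA : A ⊆ configs S N) (hB : B ⊆ configs S N)
    (hdisj : Disjoint A B) (hAne : A.Nonempty)
    -- the equilibrium potential between A and B
    (h : (S → ℕ) → ℝ)
    (hh1 : ∀ η ∈ A, h η = 1) (hh0 : ∀ η ∈ B, h η = 0)
    (hharm : ∀ η ∈ configs S N, η ∉ A → η ∉ B → LgenR α r h η = 0)
    -- test function and test flow
    (ε : ℝ) (g : (S → ℕ) → ℝ)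
    (hg0 : ∀ η ∈ A ∪ B, g η = 0)
    (ψ : (S → ℕ) → (S → ℕ) → ℝ)
    (hanti : ∀ η ζ, ψ η ζ = -ψ ζ η)
    (hdiv : ∑ η ∈ A, divFlow S r N ψ η = 1 + ε) :
    (1 + ε + ∑ η ∈ configs S N \ (A ∪ B), h η * divFlow S r N ψ η) ^ 2 ≤
      DirN α r (μ N) N h *
        flowNormSq S α r (μ N) N (fun η ζ => PhiF α r (μ N) g η ζ - ψ η ζ) ∧
    1 + 2 * ε + 2 * ∑ η ∈ configs S N \ (A ∪ B), h η * divFlow S r N ψ η ≤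
      DirN α r (μ N) N h *
        flowNormSq S α r (μ N) N (fun η ζ => PhiF α r (μ N) g η ζ - ψ η ζ) := by
  have hmstar_pos : ∀ x, 0 < mstar x := fun x => by
    obtain ⟨x₀, hx₀⟩ := hMstar.1
    rw [hmstar, ← hx₀]
    exact div_pos (hm x) (hm x₀)
  have hμ_pos : ∀ η, 0 < μ N η := fun η => by
    rw [hμ, hZ]
    exact zeroRangeMeasure_pos hmstar_pos hN ⟨_, hA hAne.choose_spec⟩ α η
  set X := ∑ η ∈ configs S N \ (A ∪ B), h η * divFlow S r N ψ η
  have hharm' : ∀ η ∈ configs S N, g η ≠ 0 → LgenR α r h η = 0 := fun η hη hg =>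
    hharm η hη (fun hηA => hg (hg0 η (mem_union_left B hηA)))
      (fun hηB => hg (hg0 η (mem_union_right A hηB)))
  have hpair : ∑ η ∈ configs S N, ∑ ζ ∈ configs S N, (if AdjZR r η ζ then
      (h η - h ζ) * (PhiF α r (μ N) g η ζ - ψ η ζ) else 0) = -2 * (1 + ε + X) := by
    rw [sum_adjZR_sub_mul_PhiF_sub hr0 hrdiag hharm' hanti,
      sum_mul_eq_sum_add_sum_sdiff (union_subset hA hB) hdisj hh1 hh0, hdiv]
  have hCS := sq_sum_sum_ite_adj_mul_le (V := configs S N) (adj := AdjZR r)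
    (w := csymZR α r (μ N)) (fun _ _ => csymZR_pos hr0 hμ_pos) (fun η ζ => h η - h ζ)
    (fun η ζ => PhiF α r (μ N) g η ζ - ψ η ζ)
  rw [hpair] at hCS
  have hbound : (1 + ε + X) ^ 2 ≤ DirN α r (μ N) N h *
      flowNormSq S α r (μ N) N (fun η ζ => PhiF α r (μ N) g η ζ - ψ η ζ) := by
    rw [DirN_eq_sum_adjZR_csymZR hr0 hrdiag, flowNormSq]
    nlinarith [hCS]
  exact ⟨hbound, le_trans (by nlinarith [sq_nonneg (ε + X)]) hbound⟩

theorem stmt_5 {S : Type*} [Fintype S] (α : ℝ) (hα : 2 < α)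
    (r : S → S → ℝ) (hr0 : ∀ x y, 0 ≤ r x y) (hrdiag : ∀ x, r x x = 0)
    (hirr : ∀ x y : S, Relation.ReflTransGen (fun a b => 0 < r a b) x y)
    (m : S → ℝ) (hm : ∀ x, 0 < m x)
    (hinv : ∀ x, ∑ y, m x * r x y = ∑ y, m y * r y x)
    (Mstar : ℝ) (hMstar : IsGreatest (Set.range m) Mstar)
    (mstar : S → ℝ) (hmstar : ∀ x, mstar x = m x / Mstar)
    (Z : ℕ → ℝ)
    (hZ : ∀ N, Z N = (N : ℝ) ^ α *
      ∑ η ∈ configs S N, (∏ x, mstar x ^ η x) / ∏ x, aZR α (η x))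
    (μ : ℕ → (S → ℕ) → ℝ)
    (hμ : ∀ N η, μ N η =
      (N : ℝ) ^ α * (∏ x, mstar x ^ η x) / (Z N * ∏ x, aZR α (η x)))
    (N : ℕ) (hN : 1 ≤ N)
    (A B : Finset (S → ℕ)) (hA : A ⊆ configs S N) (hB : B ⊆ configs S N)
    (hdisj : Disjoint A B) (hAne : A.Nonempty) (hBne : B.Nonempty)
    -- the equilibrium potential between A and B
    (h : (S → ℕ) → ℝ)
    (hh1 : ∀ η ∈ A, h η = 1) (hh0 : ∀ η ∈ B, h η = 0)
    (hharm : ∀ η ∈ configs S N, η ∉ A → η ∉ B → LgenR α r h η = 0)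
    -- test function and test flow
    (ε : ℝ) (g : (S → ℕ) → ℝ)
    (hg0 : ∀ η ∈ A ∪ B, g η = 0)
    (ψ : (S → ℕ) → (S → ℕ) → ℝ)
    (hanti : ∀ η ζ, ψ η ζ = -ψ ζ η)
    (hsupp : ∀ η ζ, ¬AdjZR r η ζ → ψ η ζ = 0)
    (hdiv : ∑ η ∈ A, divFlow S r N ψ η = 1 + ε) :
    (1 + ε + ∑ η ∈ configs S N \ (A ∪ B), h η * divFlow S r N ψ η) ^ 2 ≤
      DirN α r (μ N) N h *
        flowNormSq S α r (μ N) N (fun η ζ => PhiF α r (μ N) g η ζ - ψ η ζ) ∧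
    1 + 2 * ε + 2 * ∑ η ∈ configs S N \ (A ∪ B), h η * divFlow S r N ψ η ≤
      DirN α r (μ N) N h *
        flowNormSq S α r (μ N) N (fun η ζ => PhiF α r (μ N) g η ζ - ψ η ζ) :=
  stmt_5_general α r hr0 hrdiag m hm Mstar hMstar mstar hmstar Z hZ μ hμ N hN A B hA hB hdisj hAne h
    hh1 hh0 hharm ε g hg0 ψ hanti hdiv
end
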